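/- Define F : ℝ³ → ℍ by F(x₀,x₁,x₂) = 2·exp(x₀)(cos x₁ + sin x₁·i)·x₂·j + exp(x₀)(cos x₁ - sin x₁·i). Then F satisfies ∂F/∂x₀ + i·∂F/∂x₁ + j·∂F/∂x₂ = 0, ∂F/∂x₀ = F, and F(0,0,0) = 1. -/

import Mathlib

/-- The quaternion unit `i`. -/
noncomputable def qi : Quaternion ℝ := ⟨0, 1, 0, 0⟩

/-- The quaternion unit `j`. -/
noncomputable def qj : Quaternion ℝ := ⟨0, 0, 1, 0⟩

/-- `F = 2 exp(z) x₂ j + exp(z̄)`, a monogenic generalization of the exponential. -/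
noncomputable def Fexp (y₀ y₁ y₂ : ℝ) : Quaternion ℝ :=
  2 * (((Real.exp y₀ : ℝ) : Quaternion ℝ) *
        (((Real.cos y₁ : ℝ) : Quaternion ℝ) + ((Real.sin y₁ : ℝ) : Quaternion ℝ) * qi)) *
      ((y₂ : ℝ) : Quaternion ℝ) * qj +
    ((Real.exp y₀ : ℝ) : Quaternion ℝ) *
      (((Real.cos y₁ : ℝ) : Quaternion ℝ) - ((Real.sin y₁ : ℝ) : Quaternion ℝ) * qi)

/-!
Write `F = exp x₀ • (2 x₂ • (e(x₁) j) + e(-x₁))` with `e(t) = cis qi t = cos t + sin t i`, so that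
`∂₀F = F`, `∂₁ e(t) = i e(t)` and `j e(t) = e(-t) j`. In `F + i ∂₁F + j ∂₂F` the terms in `x₂`
cancel because `i² = -1`, and what remains is `exp x₀ • (2 e(-x₁) + 2 e(-x₁) j²) = 0`.
-/

section Cis

variable {A : Type*}

noncomputable def cis [Ring A] [Module ℝ A] (u : A) (t : ℝ) : A :=
  Real.cos t • (1 : A) + Real.sin t • u

theorem mul_cis_of_anticommute [Ring A] [Algebra ℝ A] {u v : A} (hvu : v * u = -(u * v))
    (t : ℝ) : v * cis u t = cis u (-t) * v := by
  simp only [cis, Real.cos_neg, Real.sin_neg, mul_add, add_mul, mul_smul_comm, smul_mul_assoc,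
    hvu, mul_one, one_mul, neg_smul, smul_neg, neg_mul]

variable [NormedRing A] [NormedAlgebra ℝ A]

theorem hasDerivAt_cis {u : A} (hu : u * u = -1) (t : ℝ) :
    HasDerivAt (cis u) (u * cis u t) t := by
  have h : HasDerivAt (cis u) (-Real.sin t • 1 + Real.cos t • u) t :=
    ((Real.hasDerivAt_cos t).smul_const 1).add ((Real.hasDerivAt_sin t).smul_const u)
  convert h using 1
  rw [cis, mul_add, mul_smul_comm, mul_smul_comm, hu, mul_one, smul_neg, neg_smul, add_comm]

theorem hasDerivAt_cis_neg {u : A} (hu : u * u = -1) (t : ℝ) :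
    HasDerivAt (fun s => cis u (-s)) (-(u * cis u (-t))) t := by
  have h := (hasDerivAt_cis hu (-t)).scomp t (hasDerivAt_neg t)
  rwa [neg_one_smul] at h

end Cis

section Units

open scoped Quaternion

attribute [local simp] Quaternion.re_mul Quaternion.imI_mul Quaternion.imJ_mul Quaternion.imK_mul

theorem qi_mul_qi : qi * qi = -1 := by ext <;> simp <;> simp [qi]

theorem qj_mul_qj : qj * qj = -1 := by ext <;> simp <;> simp [qj]

theorem qj_mul_qi : qj * qi = -(qi * qj) := by ext <;> simp <;> simp [qi, qj]

end Units

theorem Fexp_eq_smul (y₀ y₁ y₂ : ℝ) :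
    Fexp y₀ y₁ y₂ = Real.exp y₀ • ((2 * y₂) • (cis qi y₁ * qj) + cis qi (-y₁)) := by
  have coe_eq_smul_one (r : ℝ) : (r : Quaternion ℝ) = r • 1 := by
    rw [← Quaternion.coe_mul_eq_smul, mul_one]
  simp only [Fexp, cis, Real.cos_neg, Real.sin_neg, Quaternion.coe_mul_eq_smul,
    Quaternion.mul_coe_eq_smul]
  simp only [coe_eq_smul_one, smul_mul_assoc, mul_smul_comm, two_mul, add_mul, one_mul]
  module

theorem Fexp_zero : Fexp 0 0 0 = 1 := by
  simp [Fexp_eq_smul, cis]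

theorem hasDerivAt_Fexp_fst (x₀ x₁ x₂ : ℝ) :
    HasDerivAt (fun t => Fexp t x₁ x₂) (Fexp x₀ x₁ x₂) x₀ := by
  simp only [Fexp_eq_smul]
  exact (Real.hasDerivAt_exp x₀).smul_const _

theorem hasDerivAt_Fexp_snd (x₀ x₁ x₂ : ℝ) :
    HasDerivAt (fun t => Fexp x₀ t x₂)
      (Real.exp x₀ • ((2 * x₂) • (qi * cis qi x₁ * qj) - qi * cis qi (-x₁))) x₁ := by
  simp only [Fexp_eq_smul, sub_eq_add_neg]
  exact ((((hasDerivAt_cis qi_mul_qi x₁).mul_const qj).const_smul (2 * x₂)).add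
    (hasDerivAt_cis_neg qi_mul_qi x₁)).const_smul (Real.exp x₀)

theorem hasDerivAt_Fexp_thd (x₀ x₁ x₂ : ℝ) :
    HasDerivAt (fun t => Fexp x₀ x₁ t) (Real.exp x₀ • (2 : ℝ) • (cis qi x₁ * qj)) x₂ := by
  simp only [Fexp_eq_smul]
  have h := ((((hasDerivAt_id x₂).const_mul 2).smul_const (cis qi x₁ * qj)).add_const
    (cis qi (-x₁))).const_smul (Real.exp x₀)
  rwa [mul_one] at h

theorem Fexp_add_qi_mul_add_qj_mul_eq_zero (x₀ x₁ x₂ : ℝ) :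
    Fexp x₀ x₁ x₂ + qi * (Real.exp x₀ • ((2 * x₂) • (qi * cis qi x₁ * qj) - qi * cis qi (-x₁)))
      + qj * (Real.exp x₀ • (2 : ℝ) • (cis qi x₁ * qj)) = 0 := by
  have hi (a : Quaternion ℝ) : qi * (qi * a) = -a := by rw [← mul_assoc, qi_mul_qi, neg_one_mul]
  have hj : qj * (cis qi x₁ * qj) = -cis qi (-x₁) := by
    rw [← mul_assoc, mul_cis_of_anticommute qj_mul_qi, mul_assoc, qj_mul_qj, mul_neg_one]
  simp only [Fexp_eq_smul, mul_smul_comm, mul_sub, mul_assoc qi, hi, hj]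
  module

theorem monogenic_exponential (x₀ x₁ x₂ : ℝ) :
    (deriv (fun t => Fexp t x₁ x₂) x₀ + qi * deriv (fun t => Fexp x₀ t x₂) x₁ +
        qj * deriv (fun t => Fexp x₀ x₁ t) x₂ = 0) ∧
      deriv (fun t => Fexp t x₁ x₂) x₀ = Fexp x₀ x₁ x₂ ∧
      Fexp 0 0 0 = 1 := by
  rw [(hasDerivAt_Fexp_fst x₀ x₁ x₂).deriv, (hasDerivAt_Fexp_snd x₀ x₁ x₂).deriv,
    (hasDerivAt_Fexp_thd x₀ x₁ x₂).deriv]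
  exact ⟨Fexp_add_qi_mul_add_qj_mul_eq_zero x₀ x₁ x₂, rfl, Fexp_zero⟩
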